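/- arXiv:2605.19460 — 2 statements merged into one kernel-verified Lean document; each statement's English description precedes it below -/
import Mathlib

section
/- With d(g, n) the Verlinde number of the (p,q)-torus knot as defined, the gluing fusion rule Σ_{0<a<p, 0<b<q} d(g, n + ℓ_{a,b}) · d(g', n' + ℓ_{a,b}) = d(g+g', n + n') holds for all nonnegative integers g, g' and multi-indices n, n'. -/
open Real Finset

/-- The Verlinde number `d(g, n)` of the `(p,q)`-torus knot exterior, where the
multi-index `n : ℕ → ℕ → ℕ` records the multiplicities `n a b` for `0 < a < p`,
`0 < b < q`. -/
noncomputable def verlinde (p q : ℕ) (g : ℕ) (n : ℕ → ℕ → ℕ) : ℝ :=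
  (1 / 4 : ℝ) ^ ((g : ℤ) - 1) *
    (1 / 2 : ℝ) ^ (∑ a ∈ Ioo 0 p, ∑ b ∈ Ioo 0 q, n a b) *
    ∑ i ∈ Ioo 0 p, ∑ j ∈ Ioo 0 q,
      ((p * q : ℝ) / (4 * Real.sin (i * π / p) ^ 2 * Real.sin (j * π / q) ^ 2))
          ^ ((g : ℤ) - 1) *
        ∏ a ∈ Ioo 0 p, ∏ b ∈ Ioo 0 q,
          (Real.sin (i * a * π / p) * Real.sin (j * b * π / q) /
            (Real.sin (i * π / p) * Real.sin (j * π / q))) ^ (n a b)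

/-- The elementary multi-index `ℓ_{a,b}`. -/
def ell (a b : ℕ) : ℕ → ℕ → ℕ := fun x y => if x = a ∧ y = b then 1 else 0

lemma cos_sum (p : ℕ) (hp : 0 < p) (k : ℤ) (hs : Real.sin (k * π / (2 * p)) ≠ 0) :
    ∑ a ∈ range p, Real.cos (k * a * π / p) = (1 - (-1 : ℝ) ^ k) / 2 := by
  have hp0 : (p : ℝ) ≠ 0 := Nat.cast_ne_zero.mpr hp.ne'
  set f : ℕ → ℝ := fun a => Real.sin ((2 * (a : ℝ) - 1) * (k * π) / (2 * p)) with hf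
  have key : ∀ a : ℕ, f (a + 1) - f a =
      2 * Real.sin (k * π / (2 * p)) * Real.cos (k * a * π / p) := by
    intro a
    have h1 : ((2 * ((a : ℝ) + 1) - 1) * (k * π) / (2 * p) -
        (2 * (a : ℝ) - 1) * (k * π) / (2 * p)) / 2 = k * π / (2 * p) := by
      field_simp; ring
    have h2 : ((2 * ((a : ℝ) + 1) - 1) * (k * π) / (2 * p) +
        (2 * (a : ℝ) - 1) * (k * π) / (2 * p)) / 2 = k * a * π / p := by
      field_simp; ring
    simp only [hf, Nat.cast_add, Nat.cast_one]
    rw [Real.sin_sub_sin, h1, h2]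
  have tele : ∑ a ∈ range p, (f (a + 1) - f a) = f p - f 0 := Finset.sum_range_sub f p
  simp only [key] at tele
  have hfp : f p = (-1 : ℝ) ^ k * -Real.sin (k * π / (2 * p)) := by
    have h3 : (2 * (p : ℝ) - 1) * (k * π) / (2 * p) = k * π - k * π / (2 * p) := by
      field_simp
    rw [hf]; simp only [h3, Real.sin_int_mul_pi_sub]; ring
  have hf0 : f 0 = -Real.sin (k * π / (2 * p)) := by
    rw [hf]; simp only [Nat.cast_zero]
    rw [show (2 * (0 : ℝ) - 1) * (k * π) / (2 * p) = -(k * π / (2 * p)) by ring]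
    exact Real.sin_neg _
  rw [hfp, hf0, ← Finset.mul_sum] at tele
  have h4 : Real.sin (k * π / (2 * p)) * (2 * ∑ a ∈ range p, Real.cos (k * a * π / p))
      = Real.sin (k * π / (2 * p)) * (1 - (-1 : ℝ) ^ k) := by linear_combination tele
  have h5 := mul_left_cancel₀ hs h4
  linarith

lemma sin_ne_zero_aux (p : ℕ) (hp : 0 < p) {k : ℤ} (hk0 : k ≠ 0) (hk : |k| < 2 * p) :
    Real.sin (k * π / (2 * p)) ≠ 0 := by
  have hp0 : (0:ℝ) < p := by exact_mod_cast hp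
  have hb : |(k : ℝ) * π / (2 * p)| < π := by
    rw [abs_div, abs_mul, abs_of_pos Real.pi_pos, abs_of_pos (by positivity : (0:ℝ) < 2 * p)]
    rw [div_lt_iff₀ (by positivity)]
    have : |(k:ℝ)| < 2 * p := by exact_mod_cast hk
    nlinarith [Real.pi_pos]
  intro h
  have h0 := (Real.sin_eq_zero_iff_of_lt_of_lt (abs_lt.mp hb).1 (abs_lt.mp hb).2).mp h
  have : (k : ℝ) = 0 := by
    field_simp [Real.pi_ne_zero] at h0
    all_goals simpa [Real.pi_ne_zero] using h0
  exact hk0 (by exact_mod_cast this)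

lemma ortho (p : ℕ) (hp : 0 < p) {i i' : ℕ} (hi : i ∈ Ioo 0 p) (hi' : i' ∈ Ioo 0 p) :
    ∑ a ∈ Ioo 0 p, Real.sin (i * a * π / p) * Real.sin (i' * a * π / p)
      = if i = i' then (p : ℝ) / 2 else 0 := by
  have hp0 : (p : ℝ) ≠ 0 := Nat.cast_ne_zero.mpr hp.ne'
  obtain ⟨hi1, hi2⟩ := Finset.mem_Ioo.mp hi
  obtain ⟨hi'1, hi'2⟩ := Finset.mem_Ioo.mp hi'
  have hIoo : Finset.Ioo 0 p = (Finset.range p).erase 0 := by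
    ext x; simp [Nat.pos_iff_ne_zero, and_comm]
  have hext : ∑ a ∈ Ioo 0 p, Real.sin (i * a * π / p) * Real.sin (i' * a * π / p)
      = ∑ a ∈ range p, Real.sin (i * a * π / p) * Real.sin (i' * a * π / p) := by
    rw [hIoo]
    exact Finset.sum_erase _ (by norm_num)
  rw [hext]
  have hterm : ∀ a : ℕ, Real.sin (i * a * π / p) * Real.sin (i' * a * π / p)
      = (Real.cos ((((i : ℤ) - i' : ℤ) : ℝ) * a * π / p)
          - Real.cos ((((i : ℤ) + i' : ℤ) : ℝ) * a * π / p)) / 2 := by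
    intro a
    have e1 : ((((i : ℤ) - i' : ℤ) : ℝ)) * a * π / p = i * a * π / p - i' * a * π / p := by
      push_cast; ring
    have e2 : ((((i : ℤ) + i' : ℤ) : ℝ)) * a * π / p = i * a * π / p + i' * a * π / p := by
      push_cast; ring
    rw [e1, e2, Real.cos_sub, Real.cos_add]; ring
  simp only [hterm]
  rw [← Finset.sum_div, Finset.sum_sub_distrib]
  have hs2 : Real.sin ((((i : ℤ) + i' : ℤ) : ℝ) * π / (2 * p)) ≠ 0 := by
    apply sin_ne_zero_aux p hp
    · omega
    · rw [abs_lt]; constructor <;> [omega; push_cast [] ] <;> omega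
  have C2 := cos_sum p hp ((i : ℤ) + i') hs2
  by_cases h : i = i'
  · subst h
    have e0 : ∀ a : ℕ, ((((i : ℤ) - i : ℤ) : ℝ)) * a * π / p = 0 := by
      intro a; push_cast; ring
    simp only [e0, Real.cos_zero, Finset.sum_const, Finset.card_range, nsmul_eq_mul, mul_one]
    rw [C2]
    have : ((-1 : ℝ) ^ ((i : ℤ) + i)) = 1 := by
      rw [show (i : ℤ) + i = 2 * i by ring]
      exact Even.neg_one_zpow (even_two_mul _)
    rw [this]
    simp
  · have hk0 : ((i : ℤ) - i') ≠ 0 := by omega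
    have hs1 : Real.sin ((((i : ℤ) - i' : ℤ) : ℝ) * π / (2 * p)) ≠ 0 := by
      apply sin_ne_zero_aux p hp hk0
      rw [abs_lt]; constructor <;> omega
    have C1 := cos_sum p hp ((i : ℤ) - i') hs1
    rw [C1, C2]
    have : ((-1 : ℝ) ^ ((i : ℤ) + i')) = ((-1 : ℝ) ^ ((i : ℤ) - i')) := by
      rw [show (i : ℤ) + i' = ((i : ℤ) - i') + 2 * i' by ring,
        zpow_add₀ (by norm_num : (-1 : ℝ) ≠ 0)]
      rw [Even.neg_one_zpow (even_two_mul _), mul_one]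
    rw [this, if_neg h]
    ring

noncomputable def Rterm (p q i j a b : ℕ) : ℝ :=
  Real.sin (i * a * π / p) * Real.sin (j * b * π / q) /
    (Real.sin (i * π / p) * Real.sin (j * π / q))

noncomputable def Tterm (p q i j : ℕ) : ℝ :=
  (p * q : ℝ) / (4 * Real.sin (i * π / p) ^ 2 * Real.sin (j * π / q) ^ 2)


lemma doubleortho (p q : ℕ) (hp : 0 < p) (hq : 0 < q) {i i' j j' : ℕ}
    (hi : i ∈ Ioo 0 p) (hi' : i' ∈ Ioo 0 p) (hj : j ∈ Ioo 0 q) (hj' : j' ∈ Ioo 0 q) :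
    ∑ a ∈ Ioo 0 p, ∑ b ∈ Ioo 0 q, Rterm p q i j a b * Rterm p q i' j' a b
      = if i = i' ∧ j = j' then Tterm p q i j else 0 := by
  have expand : ∑ a ∈ Ioo 0 p, ∑ b ∈ Ioo 0 q, Rterm p q i j a b * Rterm p q i' j' a b
      = (∑ a ∈ Ioo 0 p, Real.sin (i * a * π / p) * Real.sin (i' * a * π / p)) *
        (∑ b ∈ Ioo 0 q, Real.sin (j * b * π / q) * Real.sin (j' * b * π / q)) *
        (1 / (Real.sin (i * π / p) * Real.sin (i' * π / p) *
          (Real.sin (j * π / q) * Real.sin (j' * π / q)))) := by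
    have gen : ∀ (s t : Finset ℕ) (f g : ℕ → ℝ) (c : ℝ),
        (∑ a ∈ s, f a) * (∑ b ∈ t, g b) * c = ∑ a ∈ s, ∑ b ∈ t, f a * g b * c := by
      intro s t f g c
      rw [Finset.sum_mul_sum, Finset.sum_mul]
      exact Finset.sum_congr rfl fun a _ => by rw [Finset.sum_mul]
    rw [gen]
    refine Finset.sum_congr rfl fun a _ => Finset.sum_congr rfl fun b _ => ?_
    simp only [Rterm]
    ring
  rw [expand, ortho p hp hi hi', ortho q hq hj hj']
  by_cases h1 : i = i' <;> by_cases h2 : j = j' <;> simp [h1, h2, Tterm]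
  subst h1; subst h2
  ring

lemma exchange {α : Type*} [DecidableEq α] (A : Finset α) (F F' : α → ℝ) (R : α → α → ℝ) :
    ∑ w ∈ A, (∑ z ∈ A, F z * R z w) * (∑ z ∈ A, F' z * R z w)
      = ∑ z ∈ A, ∑ z' ∈ A, F z * F' z' * ∑ w ∈ A, R z w * R z' w := by
  have h1 : ∀ w, (∑ z ∈ A, F z * R z w) * (∑ z ∈ A, F' z * R z w)
      = ∑ z ∈ A, ∑ z' ∈ A, (F z * R z w) * (F' z' * R z' w) := fun w =>
    Finset.sum_mul_sum A A _ _
  simp only [h1]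
  rw [Finset.sum_comm]
  refine Finset.sum_congr rfl fun z _ => ?_
  rw [Finset.sum_comm]
  refine Finset.sum_congr rfl fun z' _ => ?_
  rw [Finset.mul_sum]
  refine Finset.sum_congr rfl fun w _ => ?_
  ring

lemma ell_sum {p q a b : ℕ} (ha : a ∈ Ioo 0 p) (hb : b ∈ Ioo 0 q) (n : ℕ → ℕ → ℕ) :
    ∑ x ∈ Ioo 0 p, ∑ y ∈ Ioo 0 q, (n x y + ell a b x y)
      = (∑ x ∈ Ioo 0 p, ∑ y ∈ Ioo 0 q, n x y) + 1 := by
  simp only [Finset.sum_add_distrib]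
  congr 1
  simp only [ell, ite_and]
  rw [Finset.sum_eq_single a]
  · simp only [eq_self_iff_true, if_true]
    rw [Finset.sum_ite_eq' (Ioo 0 q) b (fun _ => 1), if_pos hb]
  · intro x _ hx
    simp [hx]
  · intro h; exact absurd ha h

lemma ell_prod {p q a b : ℕ} (ha : a ∈ Ioo 0 p) (hb : b ∈ Ioo 0 q)
    (R : ℕ → ℕ → ℝ) (n : ℕ → ℕ → ℕ) :
    ∏ x ∈ Ioo 0 p, ∏ y ∈ Ioo 0 q, R x y ^ (n x y + ell a b x y)
      = (∏ x ∈ Ioo 0 p, ∏ y ∈ Ioo 0 q, R x y ^ (n x y)) * R a b := by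
  simp only [pow_add, Finset.prod_mul_distrib]
  congr 1
  simp only [ell, ite_and, pow_ite, pow_one, pow_zero]
  rw [Finset.prod_eq_single a]
  · simp only [eq_self_iff_true, if_true]
    rw [Finset.prod_ite_eq' (Ioo 0 q) b (fun y => R a y), if_pos hb]
  · intro x _ hx
    simp [hx]
  · intro h; exact absurd ha h

lemma verlinde_eq (p q g : ℕ) (n : ℕ → ℕ → ℕ) :
    verlinde p q g n = (1/4 : ℝ) ^ ((g : ℤ) - 1) *
      (1/2 : ℝ) ^ (∑ a ∈ Ioo 0 p, ∑ b ∈ Ioo 0 q, n a b) *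
      ∑ i ∈ Ioo 0 p, ∑ j ∈ Ioo 0 q, Tterm p q i j ^ ((g : ℤ) - 1) *
        ∏ a ∈ Ioo 0 p, ∏ b ∈ Ioo 0 q, Rterm p q i j a b ^ n a b := rfl

lemma verlinde_add_ell {p q a b : ℕ} (g : ℕ) (n : ℕ → ℕ → ℕ)
    (ha : a ∈ Ioo 0 p) (hb : b ∈ Ioo 0 q) :
    verlinde p q g (fun x y => n x y + ell a b x y)
      = (1/2 : ℝ) * ((1/4 : ℝ) ^ ((g : ℤ) - 1) *
          (1/2 : ℝ) ^ (∑ x ∈ Ioo 0 p, ∑ y ∈ Ioo 0 q, n x y)) *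
        ∑ i ∈ Ioo 0 p, ∑ j ∈ Ioo 0 q,
          (Tterm p q i j ^ ((g : ℤ) - 1) *
            ∏ x ∈ Ioo 0 p, ∏ y ∈ Ioo 0 q, Rterm p q i j x y ^ n x y)
          * Rterm p q i j a b := by
  rw [verlinde_eq, ell_sum ha hb, pow_succ]
  congr 1
  · ring
  refine Finset.sum_congr rfl fun i _ => Finset.sum_congr rfl fun j _ => ?_
  rw [ell_prod ha hb]
  ring

lemma sin_pos_of_mem {p i : ℕ} (hi : i ∈ Ioo 0 p) : 0 < Real.sin (i * π / p) := by
  obtain ⟨h1, h2⟩ := Finset.mem_Ioo.mp hi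
  have hp : 0 < p := lt_trans h1 h2
  have hp0 : (0:ℝ) < p := by exact_mod_cast hp
  have hi0 : (0:ℝ) < i := by exact_mod_cast h1
  apply Real.sin_pos_of_pos_of_lt_pi
  · positivity
  · rw [div_lt_iff₀ hp0]
    have : (i:ℝ) < p := by exact_mod_cast h2
    nlinarith [Real.pi_pos]

theorem fusion_rule_II (p q : ℕ) (hp : 0 < p) (hq : 0 < q)
    (hpq : Nat.Coprime p q) (g g' : ℕ) (n n' : ℕ → ℕ → ℕ) :
    ∑ a ∈ Ioo 0 p, ∑ b ∈ Ioo 0 q,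
        verlinde p q g (fun x y => n x y + ell a b x y) *
          verlinde p q g' (fun x y => n' x y + ell a b x y)
      = verlinde p q (g + g') (fun x y => n x y + n' x y) := by
  set s := Ioo 0 p with hs
  set t := Ioo 0 q with ht
  set A : Finset (ℕ × ℕ) := s ×ˢ t with hA
  set F : (ℕ × ℕ) → ℝ := fun z => Tterm p q z.1 z.2 ^ ((g : ℤ) - 1) *
    ∏ x ∈ s, ∏ y ∈ t, Rterm p q z.1 z.2 x y ^ n x y with hF
  set F' : (ℕ × ℕ) → ℝ := fun z => Tterm p q z.1 z.2 ^ ((g' : ℤ) - 1) *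
    ∏ x ∈ s, ∏ y ∈ t, Rterm p q z.1 z.2 x y ^ n' x y with hF'
  set R2 : (ℕ × ℕ) → (ℕ × ℕ) → ℝ := fun z w => Rterm p q z.1 z.2 w.1 w.2 with hR2
  set C : ℝ := (1/2 : ℝ) * ((1/4 : ℝ) ^ ((g : ℤ) - 1) *
    (1/2 : ℝ) ^ (∑ x ∈ s, ∑ y ∈ t, n x y)) with hC
  set C' : ℝ := (1/2 : ℝ) * ((1/4 : ℝ) ^ ((g' : ℤ) - 1) *
    (1/2 : ℝ) ^ (∑ x ∈ s, ∑ y ∈ t, n' x y)) with hC'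
  have convF : ∀ a b : ℕ,
      (∑ i ∈ s, ∑ j ∈ t, (Tterm p q i j ^ ((g : ℤ) - 1) *
        ∏ x ∈ s, ∏ y ∈ t, Rterm p q i j x y ^ n x y) * Rterm p q i j a b)
      = ∑ z ∈ A, F z * R2 z (a, b) := fun a b =>
    (Finset.sum_product' s t (fun i j => (Tterm p q i j ^ ((g : ℤ) - 1) *
      ∏ x ∈ s, ∏ y ∈ t, Rterm p q i j x y ^ n x y) * Rterm p q i j a b)).symm
  have convF' : ∀ a b : ℕ,
      (∑ i ∈ s, ∑ j ∈ t, (Tterm p q i j ^ ((g' : ℤ) - 1) *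
        ∏ x ∈ s, ∏ y ∈ t, Rterm p q i j x y ^ n' x y) * Rterm p q i j a b)
      = ∑ z ∈ A, F' z * R2 z (a, b) := fun a b =>
    (Finset.sum_product' s t (fun i j => (Tterm p q i j ^ ((g' : ℤ) - 1) *
      ∏ x ∈ s, ∏ y ∈ t, Rterm p q i j x y ^ n' x y) * Rterm p q i j a b)).symm
  have step1 : ∑ a ∈ s, ∑ b ∈ t,
      verlinde p q g (fun x y => n x y + ell a b x y) *
        verlinde p q g' (fun x y => n' x y + ell a b x y)
      = ∑ a ∈ s, ∑ b ∈ t, (C * C') *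
          ((∑ z ∈ A, F z * R2 z (a, b)) * (∑ z ∈ A, F' z * R2 z (a, b))) := by
    refine Finset.sum_congr rfl fun a ha => Finset.sum_congr rfl fun b hb => ?_
    rw [verlinde_add_ell g n ha hb, verlinde_add_ell g' n' ha hb, convF a b, convF' a b]
    ring
  rw [step1]
  rw [show (∑ a ∈ s, ∑ b ∈ t, (C * C') *
      ((∑ z ∈ A, F z * R2 z (a, b)) * (∑ z ∈ A, F' z * R2 z (a, b))))
      = ∑ w ∈ A, (C * C') *
        ((∑ z ∈ A, F z * R2 z w) * (∑ z ∈ A, F' z * R2 z w)) from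
    (Finset.sum_product' s t (fun a b => (C * C') *
      ((∑ z ∈ A, F z * R2 z (a, b)) * (∑ z ∈ A, F' z * R2 z (a, b))))).symm]
  rw [← Finset.mul_sum, exchange A F F' R2]
  -- orthogonality
  have horth : ∀ z ∈ A, ∀ z' ∈ A, (∑ w ∈ A, R2 z w * R2 z' w)
      = if z = z' then Tterm p q z.1 z.2 else 0 := by
    intro z hz z' hz'
    obtain ⟨hz1, hz2⟩ := Finset.mem_product.mp hz
    obtain ⟨hz'1, hz'2⟩ := Finset.mem_product.mp hz'
    rw [show (∑ w ∈ A, R2 z w * R2 z' w)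
        = ∑ a ∈ s, ∑ b ∈ t, Rterm p q z.1 z.2 a b * Rterm p q z'.1 z'.2 a b from
      Finset.sum_product' s t (fun a b => Rterm p q z.1 z.2 a b * Rterm p q z'.1 z'.2 a b)]
    rw [doubleortho p q hp hq hz1 hz'1 hz2 hz'2]
    congr 1
    simp [Prod.ext_iff]
  have step2 : ∑ z ∈ A, ∑ z' ∈ A, F z * F' z' * ∑ w ∈ A, R2 z w * R2 z' w
      = ∑ z ∈ A, F z * F' z * Tterm p q z.1 z.2 := by
    refine Finset.sum_congr rfl fun z hz => ?_
    rw [Finset.sum_congr rfl fun z' hz' => by rw [horth z hz z' hz']]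
    simp only [mul_ite, mul_zero]
    rw [Finset.sum_ite_eq A z (fun z' => F z * F' z' * Tterm p q z.1 z.2), if_pos hz]
  rw [step2]
  -- right-hand side
  rw [verlinde_eq]
  rw [show (∑ i ∈ s, ∑ j ∈ t, Tterm p q i j ^ ((↑(g + g') : ℤ) - 1) *
      ∏ a ∈ s, ∏ b ∈ t, Rterm p q i j a b ^ (n a b + n' a b))
      = ∑ z ∈ A, Tterm p q z.1 z.2 ^ ((↑(g + g') : ℤ) - 1) *
        ∏ a ∈ s, ∏ b ∈ t, Rterm p q z.1 z.2 a b ^ (n a b + n' a b) from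
    (Finset.sum_product' s t (fun i j => Tterm p q i j ^ ((↑(g + g') : ℤ) - 1) *
      ∏ a ∈ s, ∏ b ∈ t, Rterm p q i j a b ^ (n a b + n' a b))).symm]
  simp only [Finset.mul_sum]
  refine Finset.sum_congr rfl fun z hz => ?_
  obtain ⟨hz1, hz2⟩ := Finset.mem_product.mp hz
  -- nonzeroness of Tterm
  have hsp := sin_pos_of_mem hz1
  have hsq := sin_pos_of_mem hz2
  have hp0 : (0:ℝ) < p := by exact_mod_cast hp
  have hq0 : (0:ℝ) < q := by exact_mod_cast hq
  have hT0 : Tterm p q z.1 z.2 ≠ 0 := by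
    rw [Tterm]; positivity
  have hexp : ((g : ℤ) - 1) + (((g' : ℤ) - 1) + 1) = (↑(g + g') : ℤ) - 1 := by
    push_cast; ring
  have eT : Tterm p q z.1 z.2 ^ ((g : ℤ) - 1) * Tterm p q z.1 z.2 ^ ((g' : ℤ) - 1) *
      Tterm p q z.1 z.2 = Tterm p q z.1 z.2 ^ ((↑(g + g') : ℤ) - 1) := by
    calc Tterm p q z.1 z.2 ^ ((g : ℤ) - 1) * Tterm p q z.1 z.2 ^ ((g' : ℤ) - 1) *
        Tterm p q z.1 z.2
        = Tterm p q z.1 z.2 ^ ((g : ℤ) - 1) *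
          (Tterm p q z.1 z.2 ^ ((g' : ℤ) - 1) * Tterm p q z.1 z.2 ^ (1 : ℤ)) := by
          rw [zpow_one]; ring
      _ = Tterm p q z.1 z.2 ^ (((g : ℤ) - 1) + (((g' : ℤ) - 1) + 1)) := by
          rw [← zpow_add₀ hT0, ← zpow_add₀ hT0]
      _ = Tterm p q z.1 z.2 ^ ((↑(g + g') : ℤ) - 1) := by rw [hexp]
  have e4 : ((1:ℝ)/4) ^ ((↑(g + g') : ℤ) - 1)
      = (1/4 : ℝ) ^ ((g : ℤ) - 1) * (1/4 : ℝ) ^ ((g' : ℤ) - 1) * (1/4 : ℝ) := by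
    have h40 : ((1:ℝ)/4) ≠ 0 := by norm_num
    calc ((1:ℝ)/4) ^ ((↑(g + g') : ℤ) - 1)
        = ((1:ℝ)/4) ^ (((g : ℤ) - 1) + (((g' : ℤ) - 1) + 1)) := by rw [hexp]
      _ = _ := by rw [zpow_add₀ h40, zpow_add₀ h40, zpow_one]; ring
  have eP : (∏ x ∈ s, ∏ y ∈ t, Rterm p q z.1 z.2 x y ^ n x y) *
      (∏ x ∈ s, ∏ y ∈ t, Rterm p q z.1 z.2 x y ^ n' x y)
      = ∏ x ∈ s, ∏ y ∈ t, Rterm p q z.1 z.2 x y ^ (n x y + n' x y) := by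
    simp only [pow_add, Finset.prod_mul_distrib]
  have eN : ∑ x ∈ s, ∑ y ∈ t, (n x y + n' x y)
      = (∑ x ∈ s, ∑ y ∈ t, n x y) + ∑ x ∈ s, ∑ y ∈ t, n' x y := by
    simp only [Finset.sum_add_distrib]
  simp only [hC, hC', hF, hF']
  rw [eN, pow_add, e4, ← eP, ← eT]
  ring
end

section
/- For any coprime positive integers p, q with q odd and any integer g ≥ 0, the quantity (1/2) Σ_{0<a<p, 0<b<q} (pq / (8 sin²(aπ/p) sin²(bπ/q)))^{g−1} is an integer. -/
open Real Finset Polynomial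

noncomputable def zeta (N : ℕ) : ℂ := Complex.exp (2 * Real.pi * Complex.I / N)

lemma zeta_prim (N : ℕ) (hN : N ≠ 0) : IsPrimitiveRoot (zeta N) N :=
  Complex.isPrimitiveRoot_exp N hN

lemma zeta_pow_N (N : ℕ) (hN : N ≠ 0) : (zeta N) ^ N = 1 := (zeta_prim N hN).pow_eq_one

lemma zeta_pow_ne_one {N a : ℕ} (ha : a ∈ Ioo 0 N) : (zeta N) ^ a ≠ 1 := by
  have h := (zeta_prim N (by rintro rfl; simp at ha)).pow_ne_one_of_pos_of_lt
    (mem_Ioo.1 ha).1.ne' (mem_Ioo.1 ha).2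
  exact h

-- X^N - 1 = ∏ over range

lemma X_pow_sub_one_prod (N : ℕ) (hN : N ≠ 0) :
    (X ^ N - 1 : ℂ[X]) = ∏ i ∈ range N, (X - C ((zeta N) ^ i)) := by
  have hmonic : (X ^ N - C (1 : ℂ)).Monic := monic_X_pow_sub_C (1 : ℂ) hN
  have hroots : (X ^ N - C (1 : ℂ)).roots = (Multiset.range N).map (fun i => (zeta N) ^ i) := by
    have := (zeta_prim N hN).nthRoots_eq (α := (1:ℂ)) (a := (1:ℂ)) (one_pow N)
    simpa [Polynomial.nthRoots, mul_one] using this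
  have hcard : Multiset.card (X ^ N - C (1 : ℂ)).roots = (X ^ N - C (1:ℂ)).natDegree := by
    rw [hroots, Multiset.card_map, Multiset.card_range, natDegree_X_pow_sub_C]
  have := Polynomial.prod_multiset_X_sub_C_of_monic_of_roots_card_eq hmonic hcard
  calc (X ^ N - 1 : ℂ[X]) = X ^ N - C 1 := by rw [map_one]
    _ = ((X ^ N - C (1:ℂ)).roots.map fun a => X - C a).prod := this.symm
    _ = ∏ i ∈ range N, (X - C ((zeta N) ^ i)) := by
        rw [hroots, Multiset.map_map]
        rfl

lemma prod_Ioo_poly (N : ℕ) (hN : N ≠ 0) :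
    ∏ i ∈ Ioo 0 N, (X - C ((zeta N) ^ i)) = ∑ i ∈ range N, (X : ℂ[X]) ^ i := by
  have h0 : (0:ℕ) < N := Nat.pos_of_ne_zero hN
  have hsplit : (range N) = insert 0 (Ioo 0 N) := by
    rw [Finset.range_eq_Ico, Finset.Ioo_insert_left h0]
  have h1 : (X ^ N - 1 : ℂ[X]) = (X - 1) * ∏ i ∈ Ioo 0 N, (X - C ((zeta N) ^ i)) := by
    rw [X_pow_sub_one_prod N hN, hsplit, Finset.prod_insert (by simp)]
    simp
  have h2 : (X ^ N - 1 : ℂ[X]) = (X - 1) * ∑ i ∈ range N, (X : ℂ[X]) ^ i := by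
    have := geom_sum_mul (X : ℂ[X]) N
    linear_combination -this
  have hX1 : (X - 1 : ℂ[X]) ≠ 0 := X_sub_C_ne_zero 1
  exact mul_left_cancel₀ hX1 (h1.symm.trans h2)

lemma prod_Ioo_one_sub (N : ℕ) (hN : N ≠ 0) :
    ∏ i ∈ Ioo 0 N, (1 - (zeta N) ^ i) = (N : ℂ) := by
  have := congrArg (Polynomial.eval 1) (prod_Ioo_poly N hN)
  simpa [Polynomial.eval_prod] using this

lemma filter_sum {N : ℕ} (μ : ℂ) (hμ : μ ^ N = 1) :
    ∑ a ∈ range N, μ ^ a = if μ = 1 then (N : ℂ) else 0 := by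
  split_ifs with h
  · simp [h]
  · rw [geom_sum_eq h, hμ]; simp

lemma v_identity (m : ℕ) (z : ℂ) :
    (1 - z) * ∑ j ∈ range m, ((m - j : ℕ) : ℂ) * z ^ j
      = ((m : ℂ) + 1) - ∑ i ∈ range (m+1), z ^ i := by
  induction m with
  | zero => simp
  | succ m ih =>
    have key : ∑ j ∈ range (m+1), (((m+1) - j : ℕ) : ℂ) * z ^ j
        = (∑ j ∈ range m, ((m - j : ℕ) : ℂ) * z ^ j) + ∑ j ∈ range (m+1), z ^ j := by
      have step : ∀ j ∈ range (m+1),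
          (((m+1) - j : ℕ) : ℂ) * z ^ j = ((m - j : ℕ) : ℂ) * z ^ j + z ^ j := by
        intro j hj
        have hjm : j ≤ m := Nat.lt_succ_iff.1 (Finset.mem_range.1 hj)
        have : (m+1) - j = (m - j) + 1 := by omega
        rw [this]; push_cast; ring
      rw [Finset.sum_congr rfl step, Finset.sum_add_distrib, Finset.sum_range_succ,
        Nat.sub_self]
      simp
    rw [key, mul_add, ih]
    have hg : (1 - z) * ∑ j ∈ range (m+1), z ^ j = 1 - z ^ (m+1) := by
      have := geom_sum_mul z (m+1)
      linear_combination -this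
    rw [hg, Finset.sum_range_succ (n := m+1), Finset.sum_range_succ (n := m)]
    push_cast
    ring

lemma zeta_pow_eq (N a : ℕ) (hN : N ≠ 0) :
    zeta N ^ a = Complex.exp (((2 * a * Real.pi / N : ℝ) : ℂ) * Complex.I) := by
  rw [zeta, ← Complex.exp_nat_mul]
  congr 1
  have : (N : ℂ) ≠ 0 := Nat.cast_ne_zero.2 hN
  push_cast
  field_simp

lemma zeta_pow_sub (N a : ℕ) (hN : N ≠ 0) (ha : a ≤ N) :
    zeta N ^ (N - a) = (zeta N ^ a)⁻¹ := by
  have h1 : zeta N ^ (N - a) * zeta N ^ a = 1 := by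
    rw [← pow_add, Nat.sub_add_cancel ha]
    have := Complex.isPrimitiveRoot_exp N hN
    exact this.pow_eq_one
  exact eq_inv_of_mul_eq_one_left h1

lemma four_sin_sq (N a : ℕ) (hN : N ≠ 0) (ha : a ≤ N) :
    ((4 * Real.sin (a * Real.pi / N) ^ 2 : ℝ) : ℂ)
      = (1 - zeta N ^ a) * (1 - zeta N ^ (N - a)) := by
  have hθ : zeta N ^ a = Complex.exp (((2 * a * Real.pi / N : ℝ) : ℂ) * Complex.I) :=
    zeta_pow_eq N a hN
  set θ : ℝ := 2 * a * Real.pi / N with hθdef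
  rw [zeta_pow_sub N a hN ha, hθ, ← Complex.exp_neg]
  rw [show (-(((θ:ℝ):ℂ) * Complex.I)) = ((-θ : ℝ) : ℂ) * Complex.I by push_cast; ring]
  simp only [Complex.exp_mul_I]
  have hreal : (4 * Real.sin (a * Real.pi / N) ^ 2 : ℝ)
      = 2 - 2 * Real.cos θ := by
    have h2x : θ = 2 * (a * Real.pi / N) := by rw [hθdef]; ring
    rw [h2x, Real.sin_sq_eq_half_sub]
    ring
  rw [hreal]
  push_cast
  simp only [Complex.cos_neg, Complex.sin_neg]
  linear_combination (-1 : ℂ) * (Complex.sin_sq_add_cos_sq ((θ:ℝ):ℂ))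
    + (Complex.sin ((θ:ℝ):ℂ))^2 * Complex.I_sq

noncomputable def Acx (N a : ℕ) : ℝ := N / (4 * Real.sin (a * Real.pi / N) ^ 2)

lemma sin_pos_of_mem_s18 {N a : ℕ} (ha : a ∈ Ioo 0 N) : 0 < Real.sin (a * Real.pi / N) := by
  obtain ⟨h1, h2⟩ := mem_Ioo.1 ha
  have hN : (0:ℝ) < N := by
    have : (0:ℝ) ≤ N := Nat.cast_nonneg N
    have h2' : (a:ℝ) < N := by exact_mod_cast h2
    have h1' : (0:ℝ) < a := by exact_mod_cast h1
    linarith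
  have h1' : (0:ℝ) < a := by exact_mod_cast h1
  apply Real.sin_pos_of_pos_of_lt_pi
  · positivity
  · rw [div_lt_iff₀ hN]
    have : (a:ℝ) < N := by exact_mod_cast h2
    nlinarith [Real.pi_pos]

lemma Acx_mul (N a : ℕ) (hN : N ≠ 0) (ha : a ∈ Ioo 0 N) :
    ((Acx N a : ℝ) : ℂ) * ((1 - zeta N ^ a) * (1 - zeta N ^ (N - a))) = N := by
  rw [← four_sin_sq N a hN (le_of_lt (mem_Ioo.1 ha).2)]
  have hs : Real.sin (a * Real.pi / N) ≠ 0 := ne_of_gt (sin_pos_of_mem_s18 ha)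
  rw [Acx, ← Complex.ofReal_mul]
  rw [show ((N:ℝ) / (4 * Real.sin (a * Real.pi / N) ^ 2) * (4 * Real.sin (a * Real.pi / N) ^ 2) : ℝ) = (N:ℝ) from by field_simp]
  simp

lemma Acx_eq_prod (N a : ℕ) (hN : N ≠ 0) (ha : a ∈ Ioo 0 N) (hne : 2 * a ≠ N) :
    ((Acx N a : ℝ) : ℂ) = ∏ c ∈ ((Ioo 0 N).erase a).erase (N - a), (1 - zeta N ^ c) := by
  obtain ⟨h1, h2⟩ := mem_Ioo.1 ha
  have hmem1 : a ∈ Ioo 0 N := ha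
  have hmem2 : N - a ∈ (Ioo 0 N).erase a := by
    rw [Finset.mem_erase, mem_Ioo]
    refine ⟨by omega, by omega, by omega⟩
  have hprod : (1 - zeta N ^ a) * ((1 - zeta N ^ (N - a)) *
      ∏ c ∈ ((Ioo 0 N).erase a).erase (N - a), (1 - zeta N ^ c)) = N := by
    rw [Finset.mul_prod_erase ((Ioo 0 N).erase a) (fun c => 1 - zeta N ^ c) hmem2,
      Finset.mul_prod_erase (Ioo 0 N) (fun c => 1 - zeta N ^ c) hmem1]
    exact prod_Ioo_one_sub N hN
  have hAm := Acx_mul N a hN ha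
  have hd : (1 - zeta N ^ a) * (1 - zeta N ^ (N - a)) ≠ 0 := by
    intro h0
    rw [h0, mul_zero] at hAm
    exact (Nat.cast_ne_zero.2 hN : (N:ℂ) ≠ 0) hAm.symm
  apply mul_left_cancel₀ hd
  rw [mul_comm ((1 - zeta N ^ a) * (1 - zeta N ^ (N-a))) _, hAm]
  rw [← hprod]; ring

lemma zeta_int (N c : ℕ) (hN : N ≠ 0) : IsIntegral ℤ (zeta N ^ c) := by
  have h : IsIntegral ℤ (zeta N) := by
    refine ⟨X ^ N - C 1, monic_X_pow_sub_C 1 hN, ?_⟩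
    have : (zeta N) ^ N = 1 := (Complex.isPrimitiveRoot_exp N hN).pow_eq_one
    simp [this]
  exact h.pow c

lemma one_sub_zeta_int (N c : ℕ) (hN : N ≠ 0) : IsIntegral ℤ (1 - zeta N ^ c) :=
  isIntegral_one.sub (zeta_int N c hN)

lemma Acx_int (N a : ℕ) (hN : N ≠ 0) (ha : a ∈ Ioo 0 N) (hne : 2 * a ≠ N) :
    IsIntegral ℤ ((Acx N a : ℝ) : ℂ) := by
  rw [Acx_eq_prod N a hN ha hne]
  have : ∀ c ∈ ((Ioo 0 N).erase a).erase (N - a), (1 - zeta N ^ c) ∈ integralClosure ℤ ℂ :=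
    fun c _ => one_sub_zeta_int N c hN
  exact prod_mem this

lemma two_Acx_int (N a : ℕ) (hN : N ≠ 0) (ha : a ∈ Ioo 0 N) :
    IsIntegral ℤ (((2 * Acx N a : ℝ)) : ℂ) := by
  by_cases hne : 2 * a = N
  · have hs : Real.sin (a * Real.pi / N) = 1 := by
      have : (a : ℝ) * Real.pi / N = Real.pi / 2 := by
        have hN2 : (N:ℝ) = 2 * a := by exact_mod_cast hne.symm
        rw [hN2]
        have ha0 : (a:ℝ) ≠ 0 := by
          have := (mem_Ioo.1 ha).1; positivity
        field_simp
      rw [this, Real.sin_pi_div_two]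
    have : (2 * Acx N a : ℝ) = (a : ℝ) := by
      rw [Acx, hs]
      have hN2 : (N:ℝ) = 2 * a := by exact_mod_cast hne.symm
      rw [hN2]; ring
    rw [this]
    have : ((a:ℝ):ℂ) = algebraMap ℤ ℂ (a : ℤ) := by push_cast; simp
    rw [this]
    exact isIntegral_algebraMap
  · have : ((2 * Acx N a : ℝ):ℂ) = 2 * ((Acx N a : ℝ):ℂ) := by push_cast; ring
    rw [this]
    have h2 : IsIntegral ℤ (2:ℂ) := by
      simpa using isIntegral_algebraMap (R := ℤ) (A := ℂ) (x := 2)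
    exact h2.mul (Acx_int N a hN ha hne)

noncomputable def Vp (N : ℕ) : Polynomial ℤ :=
  ∑ j ∈ range (N-1), C ((N-1-j : ℕ) : ℤ) * X^j

noncomputable def Wp (n N : ℕ) : Polynomial ℤ :=
  (Vp N * (Vp N).comp (X^(N-1)))^n

lemma aeval_Vp (N : ℕ) (z : ℂ) :
    Polynomial.aeval z (Vp N) = ∑ j ∈ range (N-1), ((N-1-j : ℕ) : ℂ) * z ^ j := by
  rw [Vp, map_sum]
  apply Finset.sum_congr rfl
  intro j _
  simp [mul_comm]

lemma Vp_eq (N a : ℕ) (hN : N ≠ 0) (ha : a ∈ Ioo 0 N) :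
    (1 - zeta N ^ a) * Polynomial.aeval (zeta N ^ a) (Vp N) = N := by
  rw [aeval_Vp]
  have hv := v_identity (N-1) (zeta N ^ a)
  have hN1 : (N - 1) + 1 = N := by
    have := Nat.pos_of_ne_zero hN; omega
  rw [hN1] at hv
  have hgeo : ∑ i ∈ range N, (zeta N ^ a) ^ i = 0 := by
    have hpow : (zeta N ^ a) ^ N = 1 := by
      rw [← pow_mul, mul_comm, pow_mul, zeta_pow_N N hN, one_pow]
    rw [filter_sum _ hpow, if_neg (zeta_pow_ne_one ha)]
  rw [hgeo] at hv
  rw [hv]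
  have : ((N - 1 : ℕ) : ℂ) = (N : ℂ) - 1 := by
    have := Nat.pos_of_ne_zero hN
    push_cast [Nat.cast_sub (by omega : 1 ≤ N)]
    ring
  rw [this]; ring

lemma mem_Ioo_rev {N a : ℕ} (ha : a ∈ Ioo 0 N) : N - a ∈ Ioo 0 N := by
  rw [mem_Ioo] at ha ⊢; omega

lemma zeta_pow_rev (N a : ℕ) (hN : N ≠ 0) (ha : a ∈ Ioo 0 N) :
    (zeta N ^ a) ^ (N - 1) = zeta N ^ (N - a) := by
  obtain ⟨h1, h2⟩ := mem_Ioo.1 ha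
  have hc : (zeta N ^ a) ^ (N - 1) * zeta N ^ a = zeta N ^ (N - a) * zeta N ^ a := by
    rw [← pow_succ, show (N-1)+1 = N from by omega, ← pow_mul, mul_comm a N, pow_mul,
      zeta_pow_N N hN, one_pow, ← pow_add, show (N-a)+a = N from by omega, zeta_pow_N N hN]
  exact mul_right_cancel₀ (pow_ne_zero a (Complex.exp_ne_zero _)) hc

lemma Acx_eq_VV (N a : ℕ) (hN : N ≠ 0) (ha : a ∈ Ioo 0 N) :
    ((Acx N a : ℝ) : ℂ) * N
      = Polynomial.aeval (zeta N ^ a) (Vp N) * Polynomial.aeval (zeta N ^ (N-a)) (Vp N) := by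
  have h1 := Vp_eq N a hN ha
  have h2 := Vp_eq N (N-a) hN (mem_Ioo_rev ha)
  have h3 := Acx_mul N a hN ha
  have hNne : (N:ℂ) ≠ 0 := Nat.cast_ne_zero.2 hN
  apply mul_right_cancel₀ hNne
  set A := ((Acx N a : ℝ) : ℂ)
  set d₁ := 1 - zeta N ^ a
  set d₂ := 1 - zeta N ^ (N - a)
  set v₁ := Polynomial.aeval (zeta N ^ a) (Vp N)
  set v₂ := Polynomial.aeval (zeta N ^ (N-a)) (Vp N)
  -- h1 : d₁ * v₁ = N, h2 : d₂ * v₂ = N, h3 : A * (d₁ * d₂) = N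
  linear_combination (-(A * v₂ * d₂)) * h1 - (A * (N:ℂ)) * h2 + (v₁ * v₂) * h3

lemma aeval_Wp (n N a : ℕ) (hN : N ≠ 0) (ha : a ∈ Ioo 0 N) :
    Polynomial.aeval (zeta N ^ a) (Wp n N)
      = (Polynomial.aeval (zeta N ^ a) (Vp N) * Polynomial.aeval (zeta N ^ (N-a)) (Vp N))^n := by
  rw [Wp, map_pow, map_mul, Polynomial.aeval_comp, map_pow, Polynomial.aeval_X,
    zeta_pow_rev N a hN ha]

lemma sum_aeval_mem_bot (N : ℕ) (P : Polynomial ℤ) (μ : ℂ) (hμ : μ ^ N = 1) :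
    (∑ a ∈ range N, Polynomial.aeval (μ^a) P) ∈ (⊥ : Subalgebra ℚ ℂ) := by
  have expand : ∀ a : ℕ, Polynomial.aeval (μ^a) P
      = ∑ k ∈ range (P.natDegree+1), ((P.coeff k : ℤ):ℂ) * (μ^k)^a := by
    intro a
    rw [Polynomial.aeval_eq_sum_range]
    apply Finset.sum_congr rfl
    intro k _
    rw [zsmul_eq_mul, ← pow_mul, ← pow_mul, mul_comm a k]
  have e1 : (∑ a ∈ range N, Polynomial.aeval (μ^a) P)
      = ∑ k ∈ range (P.natDegree+1), ((P.coeff k : ℤ):ℂ) * ∑ a ∈ range N, (μ^k)^a := by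
    rw [Finset.sum_congr rfl (fun a _ => expand a), Finset.sum_comm]
    exact Finset.sum_congr rfl (fun k _ => (Finset.mul_sum _ _ _).symm)
  rw [e1]
  apply Subalgebra.sum_mem
  intro k _
  apply mul_mem (intCast_mem _ _)
  rw [filter_sum (μ^k) (by rw [← pow_mul, mul_comm, pow_mul, hμ, one_pow])]
  split_ifs
  · exact natCast_mem _ _
  · exact zero_mem _

lemma aeval_one_mem_bot (P : Polynomial ℤ) : Polynomial.aeval (1:ℂ) P ∈ (⊥ : Subalgebra ℚ ℂ) := by
  rw [Polynomial.aeval_eq_sum_range]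
  apply Subalgebra.sum_mem
  intro k _
  rw [zsmul_eq_mul, one_pow, mul_one]
  exact intCast_mem _ _

lemma F_rat (N n : ℕ) (hN : N ≠ 0) :
    ((∑ a ∈ Ioo 0 N, (Acx N a)^n : ℝ) : ℂ) ∈ (⊥ : Subalgebra ℚ ℂ) := by
  have hNne : (N:ℂ) ≠ 0 := Nat.cast_ne_zero.2 hN
  have key : ∀ a ∈ Ioo 0 N, (((Acx N a) : ℝ) : ℂ)^n
      = ((N:ℂ)^n)⁻¹ * Polynomial.aeval (zeta N ^ a) (Wp n N) := by
    intro a ha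
    rw [aeval_Wp n N a hN ha, ← Acx_eq_VV N a hN ha]
    rw [mul_pow]
    field_simp
  have e : ((∑ a ∈ Ioo 0 N, (Acx N a)^n : ℝ) : ℂ)
      = ((N:ℂ)^n)⁻¹ * ∑ a ∈ Ioo 0 N, Polynomial.aeval (zeta N ^ a) (Wp n N) := by
    push_cast
    rw [Finset.mul_sum]
    exact Finset.sum_congr rfl key
  rw [e]
  apply mul_mem
  · have : ((N:ℂ)^n)⁻¹ = algebraMap ℚ ℂ (((N:ℚ)^n)⁻¹) := by push_cast; simp
    rw [this]; exact Subalgebra.algebraMap_mem _ _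
  · have hsplit : range N = insert 0 (Ioo 0 N) := by
      rw [Finset.range_eq_Ico, Finset.Ioo_insert_left (Nat.pos_of_ne_zero hN)]
    have hsum := sum_aeval_mem_bot N (Wp n N) (zeta N) (zeta_pow_N N hN)
    rw [hsplit, Finset.sum_insert (by simp)] at hsum
    have h1 := aeval_one_mem_bot (Wp n N)
    have : (∑ a ∈ Ioo 0 N, Polynomial.aeval (zeta N ^ a) (Wp n N))
        = (Polynomial.aeval ((zeta N)^0) (Wp n N) + ∑ a ∈ Ioo 0 N, Polynomial.aeval ((zeta N)^a) (Wp n N))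
          - Polynomial.aeval (1:ℂ) (Wp n N) := by
      simp
    rw [this]
    exact Subalgebra.sub_mem _ hsum h1

lemma half_sum (q : ℕ) (hodd : Odd q) (f : ℕ → ℝ)
    (hsym : ∀ b ∈ Ioo 0 q, f (q - b) = f b) :
    ∑ b ∈ Ioo 0 q, f b = 2 * ∑ b ∈ Ioc 0 ((q-1)/2), f b := by
  obtain ⟨m, hm⟩ := hodd
  have hm2 : (q - 1)/2 = m := by omega
  rw [hm2]
  have hIoo : Ioo 0 q = Ioc 0 (q - 1) := by ext x; simp [mem_Ioo, mem_Ioc]; omega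
  have hsplit := Finset.sum_Ioc_consecutive f (by omega : (0:ℕ) ≤ m) (by omega : m ≤ q - 1)
  rw [hIoo, ← hsplit]
  have hrefl : ∑ b ∈ Ioc m (q-1), f b = ∑ b ∈ Ioc 0 m, f b := by
    apply Finset.sum_nbij' (fun i => q - i) (fun i => q - i)
    · intro a ha; rw [mem_Ioc] at ha ⊢; omega
    · intro a ha; rw [mem_Ioc] at ha ⊢; omega
    · intro a ha; rw [mem_Ioc] at ha; omega
    · intro a ha; rw [mem_Ioc] at ha; omega
    · intro a ha
      rw [mem_Ioc] at ha
      exact (hsym a (by rw [mem_Ioo]; omega)).symm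
  rw [hrefl]; ring

lemma sum_sin_sq (N : ℕ) (hN : 2 ≤ N) :
    ∑ a ∈ Ioo 0 N, Real.sin (a * Real.pi / N) ^ 2 = N / 2 := by
  have hN0 : N ≠ 0 := by omega
  have hcos : ∀ a : ℕ, Real.cos (2 * a * Real.pi / N) = (zeta N ^ a).re := by
    intro a
    rw [zeta_pow_eq N a hN0, Complex.exp_ofReal_mul_I_re]
  have hsum : ∑ a ∈ Ioo 0 N, (zeta N ^ a) = -1 := by
    have hsplit : range N = insert 0 (Ioo 0 N) := by
      rw [Finset.range_eq_Ico, Finset.Ioo_insert_left (by omega : 0 < N)]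
    have := filter_sum (zeta N) (zeta_pow_N N hN0)
    rw [hsplit, Finset.sum_insert (by simp)] at this
    rw [if_neg] at this
    · have h0 : (zeta N) ^ 0 = 1 := pow_zero _
      simp only [h0] at this
      have := this
      linear_combination this
    · have := zeta_pow_ne_one (N := N) (a := 1) (by rw [mem_Ioo]; omega)
      simpa using this
  have hsumre : ∑ a ∈ Ioo 0 N, (zeta N ^ a).re = -1 := by
    rw [← Complex.re_sum, hsum]; simp
  have hterm : ∀ a : ℕ, Real.sin (a * Real.pi / N) ^ 2
      = 1/2 - Real.cos (2 * a * Real.pi / N) / 2 := by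
    intro a
    rw [Real.sin_sq_eq_half_sub]
    congr 2
    ring
  rw [Finset.sum_congr rfl (fun a _ => hterm a)]
  rw [Finset.sum_sub_distrib]
  have hcard : (Ioo 0 N).card = N - 1 := by simp [Nat.card_Ioo]
  rw [Finset.sum_const, hcard]
  have : ∑ a ∈ Ioo 0 N, Real.cos (2 * a * Real.pi / N) / 2
      = (∑ a ∈ Ioo 0 N, (zeta N ^ a).re) / 2 := by
    rw [← Finset.sum_div]
    congr 1
    exact Finset.sum_congr rfl (fun a _ => by rw [hcos])
  rw [this, hsumre]
  rw [nsmul_eq_mul, Nat.cast_sub (by omega : 1 ≤ N)]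
  push_cast
  ring
/-- Gang–Kim–Yoon integrality for torus knots: the sum of `(g-1)`-st powers of twice
the adjoint Reidemeister torsions of the `(p,q)`-torus knot exterior is an integer. -/
theorem torsion_power_sum_integral (p q : ℕ) (hp : 0 < p) (hq : 0 < q)
    (hpq : Nat.Coprime p q) (hqodd : Odd q) (g : ℕ) :
    ∃ m : ℤ,
      (1 / 2 : ℝ) *
          ∑ a ∈ Ioo 0 p, ∑ b ∈ Ioo 0 q,
            (((p : ℝ) * q) / (8 * Real.sin (a * π / p) ^ 2 * Real.sin (b * π / q) ^ 2))
              ^ ((g : ℤ) - 1)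
        = m := by
  by_cases hp1 : p = 1
  · exact ⟨0, by subst hp1; simp [show Ioo 0 1 = (∅ : Finset ℕ) from by ext x; simp; omega]⟩
  by_cases hq1 : q = 1
  · exact ⟨0, by subst hq1; simp [show Ioo 0 1 = (∅ : Finset ℕ) from by ext x; simp; omega]⟩
  have hp2 : 2 ≤ p := by omega
  have hq2 : 2 ≤ q := by omega
  have hp0 : p ≠ 0 := by omega
  have hq0 : q ≠ 0 := by omega
  have hpR : ((p:ℝ)) ≠ 0 := Nat.cast_ne_zero.2 hp0
  have hqR : ((q:ℝ)) ≠ 0 := Nat.cast_ne_zero.2 hq0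
  rcases g with _ | n
  · -- g = 0 : the value is 1
    refine ⟨1, ?_⟩
    have hexp : ((0:ℕ):ℤ) - 1 = -1 := by norm_num
    simp only [hexp, zpow_neg, zpow_one]
    have hterm : ∀ a ∈ Ioo 0 p, ∀ b ∈ Ioo 0 q,
        (((p : ℝ) * q) / (8 * Real.sin (a * π / p) ^ 2 * Real.sin (b * π / q) ^ 2))⁻¹
          = (8 / ((p:ℝ)*q)) * (Real.sin (a * π / p) ^ 2 * Real.sin (b * π / q) ^ 2) := by
      intro a ha b hb
      rw [inv_div]
      have hsa : Real.sin (a * π / p) ≠ 0 := ne_of_gt (sin_pos_of_mem_s18 ha)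
      have hsb : Real.sin (b * π / q) ≠ 0 := ne_of_gt (sin_pos_of_mem_s18 hb)
      field_simp
    rw [Finset.sum_congr rfl (fun a ha => Finset.sum_congr rfl (fun b hb => hterm a ha b hb))]
    have hfact : ∑ a ∈ Ioo 0 p, ∑ b ∈ Ioo 0 q,
        (8 / ((p:ℝ)*q)) * (Real.sin (a * π / p) ^ 2 * Real.sin (b * π / q) ^ 2)
        = (8 / ((p:ℝ)*q)) * ((∑ a ∈ Ioo 0 p, Real.sin (a * π / p) ^ 2)
            * (∑ b ∈ Ioo 0 q, Real.sin (b * π / q) ^ 2)) := by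
      rw [Finset.sum_mul_sum]
      rw [Finset.mul_sum]
      apply Finset.sum_congr rfl
      intro a _
      rw [Finset.mul_sum]
    rw [hfact, sum_sin_sq p hp2, sum_sin_sq q hq2]
    push_cast
    field_simp
    ring
  · -- g = n + 1
    have hexp : ((n+1:ℕ):ℤ) - 1 = (n:ℤ) := by push_cast; ring
    simp only [hexp, zpow_natCast]
    -- rewrite each term as (2 * Acx p a)^n * (Acx q b)^n
    have hterm : ∀ a ∈ Ioo 0 p, ∀ b ∈ Ioo 0 q,
        (((p : ℝ) * q) / (8 * Real.sin (a * π / p) ^ 2 * Real.sin (b * π / q) ^ 2)) ^ n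
          = (2 * Acx p a) ^ n * (Acx q b) ^ n := by
      intro a ha b hb
      have hsa : Real.sin (a * π / p) ≠ 0 := ne_of_gt (sin_pos_of_mem_s18 ha)
      have hsb : Real.sin (b * π / q) ≠ 0 := ne_of_gt (sin_pos_of_mem_s18 hb)
      rw [← mul_pow]
      congr 1
      rw [Acx, Acx]
      field_simp
      ring
    rw [Finset.sum_congr rfl (fun a ha => Finset.sum_congr rfl (fun b hb => hterm a ha b hb))]
    set Sp : ℝ := ∑ a ∈ Ioo 0 p, (Acx p a) ^ n with hSp
    set Sq : ℝ := ∑ b ∈ Ioo 0 q, (Acx q b) ^ n with hSqdef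
    set Xs : ℝ := ∑ a ∈ Ioo 0 p, (2 * Acx p a) ^ n with hXs
    set Ys : ℝ := ∑ b ∈ Ioc 0 ((q-1)/2), (Acx q b) ^ n with hYs
    have hsplit : ∑ a ∈ Ioo 0 p, ∑ b ∈ Ioo 0 q, (2 * Acx p a) ^ n * (Acx q b) ^ n
        = Xs * Sq := by
      rw [hXs, hSqdef, Finset.sum_mul]
      exact Finset.sum_congr rfl (fun a _ => by rw [Finset.mul_sum])
    rw [hsplit]
    have hAsym : ∀ b ∈ Ioo 0 q, ((Acx q (q - b)) ^ n : ℝ) = (Acx q b) ^ n := by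
      intro b hb
      obtain ⟨hb1, hb2⟩ := mem_Ioo.1 hb
      congr 1
      rw [Acx, Acx]
      have : ((q - b : ℕ) : ℝ) = (q:ℝ) - b := by
        push_cast [Nat.cast_sub (le_of_lt hb2)]; ring
      rw [this, show ((q:ℝ) - b) * π / q = π - b * π / q from by field_simp,
        Real.sin_pi_sub]
    have hhalf : Sq = 2 * Ys := half_sum q hqodd (fun b => (Acx q b)^n) hAsym
    -- Integrality
    have hXc : ((Xs : ℝ) : ℂ) ∈ integralClosure ℤ ℂ := by
      rw [hXs, Complex.ofReal_sum]
      apply Subalgebra.sum_mem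
      intro a ha
      rw [Complex.ofReal_pow]
      exact pow_mem (two_Acx_int p a hp0 ha) n
    have hYc : ((Ys : ℝ) : ℂ) ∈ integralClosure ℤ ℂ := by
      rw [hYs, Complex.ofReal_sum]
      apply Subalgebra.sum_mem
      intro b hb
      rw [Complex.ofReal_pow]
      obtain ⟨hb1, hb2⟩ := mem_Ioc.1 hb
      have hbIoo : b ∈ Ioo 0 q := by rw [mem_Ioo]; omega
      have hbne : 2 * b ≠ q := by
        intro h
        have hodd' : ¬ Even q := Nat.not_even_iff_odd.mpr hqodd
        exact hodd' ⟨b, by omega⟩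
      exact pow_mem (Acx_int q b hq0 hbIoo hbne) n
    have hPint : IsIntegral ℤ (((1/2 : ℝ) * (Xs * Sq) : ℝ) : ℂ) := by
      have : ((1/2 : ℝ) * (Xs * Sq) : ℝ) = Xs * Ys := by rw [hhalf]; ring
      rw [this, Complex.ofReal_mul]
      exact mul_mem hXc hYc
    -- Rationality
    have hXSp : Xs = 2^n * Sp := by
      rw [hXs, hSp, Finset.mul_sum]
      exact Finset.sum_congr rfl (fun a _ => by rw [mul_pow])
    have hPrat : (((1/2 : ℝ) * (Xs * Sq) : ℝ) : ℂ) ∈ (⊥ : Subalgebra ℚ ℂ) := by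
      have h1 : ((1/2 : ℝ) * (Xs * Sq) : ℝ) = (2^n/2) * Sp * Sq := by
        rw [hXSp]; ring
      rw [h1, Complex.ofReal_mul, Complex.ofReal_mul]
      apply mul_mem (mul_mem ?_ (F_rat p n hp0)) (F_rat q n hq0)
      have : (((2^n/2 : ℝ)) : ℂ) = algebraMap ℚ ℂ ((2^n/2 : ℚ)) := by
        rw [eq_ratCast]; push_cast; ring
      rw [this]
      exact Subalgebra.algebraMap_mem _ _
    obtain ⟨r, hr⟩ := Algebra.mem_bot.1 hPrat
    have hrint : IsIntegral ℤ r := by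
      have hinj : Function.Injective (algebraMap ℚ ℂ) := (algebraMap ℚ ℂ).injective
      have hfx : ((algebraMap ℚ ℂ).toIntAlgHom) r = ((1/2 * (Xs * Sq) : ℝ) : ℂ) := by
        rw [RingHom.toIntAlgHom_apply, hr]
      exact (isIntegral_algHom_iff ((algebraMap ℚ ℂ).toIntAlgHom) hinj).mp
        (hfx.symm ▸ hPint)
    obtain ⟨m, hm⟩ := IsIntegrallyClosed.isIntegral_iff.1 hrint
    refine ⟨m, ?_⟩
    have hfin : (((1/2 : ℝ) * (Xs * Sq) : ℝ) : ℂ) = (((m:ℝ)) : ℂ) := by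
      rw [← hr, ← hm]
      rw [eq_intCast, eq_ratCast]
      push_cast
      ring
    exact Complex.ofReal_injective hfin
end
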